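/- arXiv:2102.08018 — 5 statements merged into one kernel-verified Lean document; each statement's English description precedes it below -/
import Mathlib

section
/- Let F be a field and consider the power series ring F⟦t⟧. Let x₁(t), …, x_g(t) ∈ F⟦t⟧ and let y₁(t), …, y_g(t) ∈ F⟦t⟧ be invertible power series. Let H be the g×g matrix over F⟦t⟧ with entry H_{i,j} = x_j(t)^{i−1}/y_j(t), let W(z) = ∑_{k=0}^{g−1} w_k(t) z^k be a polynomial over F⟦t⟧ with W(x_j(t)) = 1/y_j(t) for all j, and for m ≥ 1 set r_m = ∑_{j=1}^g x_j(t)^{m−1}·x_j'(t), where x_j' denotes the formal derivative. Then for every i with 1 ≤ i ≤ g, the i-th entry of H·X', where X' = (x₁', …, x_g'), equals ∑_{k=0}^{g−1} r_{i+k} w_k; equivalently, H·X' equals the product of the g×g Hankel matrix whose (i,k) entry is r_{i+k−1} with the vector (w₀, …, w_{g−1}). -/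
/-!
With `V` the Vandermonde matrix of the `x j`, `H = Vᵀ · diag(1/y)`, the interpolation property
of `W` says `V · w = 1/y`, and the Hankel matrix of the power sums `r` is the moment matrix
`Vᵀ · diag(x') · V`. Both sides are therefore `Vᵀ` applied to the pointwise product of `x'`
and `1/y`.
-/

open Matrix

theorem Matrix.mul_diagonal_mulVec_comm {R m ι : Type*} [CommSemiring R]
    [Fintype ι] [DecidableEq ι] (A : Matrix m ι R) (v d : ι → R) : (A * diagonal v) *ᵥ d = (A * diagonal d) *ᵥ v := by
  rw [← mulVec_mulVec, ← mulVec_mulVec]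
  congr 1
  ext j
  simp only [mulVec_diagonal, mul_comm]

theorem Matrix.vandermonde_transpose_mul_diagonal_mul_vandermonde {R : Type*} [CommRing R]
    {n : ℕ} (x d : Fin n → R) :
    (vandermonde x)ᵀ * diagonal d * vandermonde x =
      of fun i k : Fin n => ∑ j, x j ^ ((i : ℕ) + k) * d j := by
  ext i k
  rw [mul_apply]
  simp only [mul_diagonal, transpose_apply, vandermonde_apply, of_apply, pow_add]
  exact Finset.sum_congr rfl fun j _ => by ring

/-- Over the power series ring `F⟦t⟧` of a field `F`, let `x₁(t), …, x_g(t)` be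
power series and `y₁(t), …, y_g(t)` invertible power series. Let `H` be the `g×g` matrix with
entries `H_{i,j} = x_j^{i−1}/y_j`, let `W(z) = ∑ w_k(t) z^k` satisfy `W(x_j) = 1/y_j` for all
`j`, and set `r_m = ∑_j x_j^{m−1}·x_j'` (formal derivative). Then the `i`-th entry of `H·X'`,
where `X' = (x₁', …, x_g')`, equals `∑_{k=0}^{g−1} r_{i+k} w_k`; equivalently `H·X'` equals the
product of the Hankel matrix with entries `r_{i+k−1}` with the vector `(w₀, …, w_{g−1})`.
(Indices are 0-based, so `H i j = x j ^ i * (y j)⁻¹` and the Hankel matrix has entries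
`r (i + k + 1)`.) -/
theorem H_mulVec_X'_eq_hankel_mulVec_w
    (F : Type*) [Field F] (g : ℕ)
    (x : Fin g → PowerSeries F) (y : Fin g → (PowerSeries F)ˣ)
    (H : Matrix (Fin g) (Fin g) (PowerSeries F))
    (hH : H = Matrix.of fun i j : Fin g => x j ^ (i : ℕ) * (↑(y j)⁻¹ : PowerSeries F))
    (w : Fin g → PowerSeries F)
    (hW : ∀ j, ∑ k : Fin g, w k * x j ^ (k : ℕ) = (↑(y j)⁻¹ : PowerSeries F))
    (r : ℕ → PowerSeries F)
    (hr : ∀ m, 1 ≤ m →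
      r m = ∑ j : Fin g, x j ^ (m - 1) * PowerSeries.derivativeFun (x j)) :
    (∀ i : Fin g,
        H.mulVec (fun j => PowerSeries.derivativeFun (x j)) i =
          ∑ k : Fin g, r ((i : ℕ) + (k : ℕ) + 1) * w k) ∧
      H.mulVec (fun j => PowerSeries.derivativeFun (x j)) =
        (Matrix.of fun i k : Fin g => r ((i : ℕ) + (k : ℕ) + 1)).mulVec w := by
  set x' := fun j => PowerSeries.derivativeFun (x j)
  set yInv := fun j => (↑(y j)⁻¹ : PowerSeries F)
  have hV : vandermonde x *ᵥ w = yInv := funext fun j => by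
    simp only [mulVec, dotProduct, vandermonde_apply, mul_comm (x j ^ _), hW, yInv]
  have hH' : H = (vandermonde x)ᵀ * diagonal yInv := by
    ext i j
    simp [hH, mul_diagonal, yInv]
  have hHankel : (of fun i k : Fin g => r ((i : ℕ) + k + 1)) =
      (vandermonde x)ᵀ * diagonal x' * vandermonde x := by
    rw [vandermonde_transpose_mul_diagonal_mul_vandermonde]
    ext i k
    simp [hr _ (Nat.le_add_left 1 _), x']
  have hmulVec : H *ᵥ x' = (of fun i k : Fin g => r ((i : ℕ) + k + 1)) *ᵥ w := by
    rw [hHankel, ← mulVec_mulVec, hV, hH', mul_diagonal_mulVec_comm]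
  exact ⟨fun i => congrFun hmulVec i, hmulVec⟩
end

section
/- Let R be a commutative ring, let x₁, …, x_g and v₁, …, v_g be elements of R, and let U(z) = ∏_{j=1}^g (z − x_j). For i = 1, …, g set F_i = ∑_{j=1}^g x_j^{i−1} v_j, and let D(z) = ∑_{i=1}^g F_i z^{g+1−i}. Write U(z)·D(z) = ∑_{k=0}^{2g} q_k z^k and define Q(z) = ∑_{k=0}^{g−1} q_{g+1+k} z^k. Then Q(z) = ∑_{j=1}^g v_j · ∏_{i≠j} (z − x_i). -/
/-!
Exchanging sums, `D = ∑_j v_j ∑_{i<g} x_j^i z^(g-i)`. With `P_j = ∏_{i ≠ j} (z - x_i)`,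
the geometric sum identity `(z - x_j) · ∑_{i<g} x_j^i z^(g-i) = z (z^g - x_j^g)` then gives
`U · D = z (z^g S - T)` with `S = ∑_j v_j P_j` and `T = ∑_j v_j x_j^g P_j`.
Both `S` and `T` have degree `< g`, so the coefficients of `U · D` from `z^(g+1)` on are
exactly those of `S`.
-/

open Polynomial

namespace Polynomial

open Finset

variable {R : Type*} [CommRing R]

theorem sum_range_C_coeff_mul_X_pow_of_mem_degreeLT {p : R[X]} {n : ℕ}
    (hp : p ∈ degreeLT R n) : ∑ k ∈ range n, C (p.coeff k) * X ^ k = p := by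
  ext m
  simp only [finsetSum_coeff, coeff_C_mul_X_pow, sum_ite_eq, mem_range]
  split_ifs with hm
  · rfl
  · exact ((degree_lt_iff_coeff_zero p n).mp (mem_degreeLT.mp hp) m (not_lt.mp hm)).symm

theorem coeff_X_pow_mul_sub_of_mem_degreeLT (p : R[X]) {q : R[X]} {n : ℕ}
    (hq : q ∈ degreeLT R n) (k : ℕ) : (X ^ n * p - q).coeff (n + k) = p.coeff k := by
  have hqk : q.degree < ↑(n + k) :=
    (mem_degreeLT.mp hq).trans_le (by exact_mod_cast n.le_add_right k)
  rw [coeff_sub, coeff_eq_zero_of_degree_lt hqk, add_comm, coeff_X_pow_mul, sub_zero]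

theorem X_sub_C_mul_sum_C_pow_mul_X_pow (a : R) (n : ℕ) :
    (X - C a) * ∑ i ∈ range n, C (a ^ i) * X ^ (n - i) = X * (X ^ n - C (a ^ n)) := by
  have hX : ∑ i ∈ range n, C (a ^ i) * X ^ (n - i)
      = X * ∑ i ∈ range n, C a ^ i * X ^ (n - 1 - i) := by
    rw [mul_sum]
    refine sum_congr rfl fun i hi => ?_
    rw [map_pow, show n - i = n - 1 - i + 1 by grind, pow_succ']
    ring
  rw [hX, map_pow]
  linear_combination (-X) * geom_sum₂_mul (C a) X n

variable {ι : Type*}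

theorem sum_range_C_powerSum_mul_X_pow (s : Finset ι) (x v : ι → R) (n : ℕ) :
    ∑ i ∈ range n, C (∑ j ∈ s, x j ^ i * v j) * X ^ (n - i)
      = ∑ j ∈ s, C (v j) * ∑ i ∈ range n, C (x j ^ i) * X ^ (n - i) := by
  simp only [map_sum, map_mul, sum_mul, mul_sum]
  rw [sum_comm]
  refine sum_congr rfl fun j _ => sum_congr rfl fun i _ => ?_
  ring

variable [DecidableEq ι]

theorem prod_erase_X_sub_C_mem_degreeLT {s : Finset ι} {j : ι} (hj : j ∈ s) (x : ι → R) :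
    ∏ i ∈ s.erase j, (X - C (x i)) ∈ degreeLT R #s := by
  have hdeg : (∏ i ∈ s.erase j, (X - C (x i))).natDegree ≤ #s - 1 :=
    (natDegree_prod_le _ _).trans <|
      (sum_le_card_nsmul _ _ 1 fun i _ => natDegree_X_sub_C_le (x i)).trans (by simp [hj])
  rw [mem_degreeLT]
  refine (degree_le_of_natDegree_le hdeg).trans_lt ?_
  exact_mod_cast Nat.sub_lt (card_pos.mpr ⟨j, hj⟩) one_pos

theorem sum_C_mul_prod_erase_X_sub_C_mem_degreeLT (s : Finset ι) (x c : ι → R) :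
    ∑ j ∈ s, C (c j) * ∏ i ∈ s.erase j, (X - C (x i)) ∈ degreeLT R #s := by
  refine Submodule.sum_mem _ fun j hj => ?_
  rw [← smul_eq_C_mul]
  exact Submodule.smul_mem _ _ (prod_erase_X_sub_C_mem_degreeLT hj x)

theorem prod_X_sub_C_mul_sum_C_mul_sum_range (s : Finset ι) (x v : ι → R) (n : ℕ) :
    (∏ i ∈ s, (X - C (x i)))
        * ∑ j ∈ s, C (v j) * ∑ i ∈ range n, C (x j ^ i) * X ^ (n - i)
      = X * (X ^ n * ∑ j ∈ s, C (v j) * ∏ i ∈ s.erase j, (X - C (x i))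
          - ∑ j ∈ s, C (v j * x j ^ n) * ∏ i ∈ s.erase j, (X - C (x i))) := by
  rw [mul_sum, mul_sum, ← sum_sub_distrib, mul_sum]
  refine sum_congr rfl fun j hj => ?_
  rw [← mul_prod_erase s _ hj, map_mul]
  linear_combination
    (C (v j) * ∏ i ∈ s.erase j, (X - C (x i))) * X_sub_C_mul_sum_C_pow_mul_X_pow (x j) n

end Polynomial

/-- Let `R` be a commutative ring, `x₁, …, x_g, v₁, …, v_g ∈ R`, and
`U(z) = ∏ (z − x_j)`. For `i = 1, …, g` set `F_i = ∑_j x_j^{i−1} v_j` and let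
`D(z) = ∑_{i=1}^g F_i z^{g+1−i}`. Writing `U·D = ∑_{k=0}^{2g} q_k z^k` and
`Q(z) = ∑_{k=0}^{g−1} q_{g+1+k} z^k`, we have `Q(z) = ∑_j v_j ∏_{i≠j} (z − x_i)`.
(Indices are 0-based here: `F i = ∑_j x_j^i v_j` for `i : Fin g` and the corresponding
monomial in `D` is `z^(g−i)`.) -/
theorem high_coeffs_of_U_mul_D
    (R : Type*) [CommRing R] (g : ℕ)
    (x v : Fin g → R)
    (U : R[X]) (hU : U = ∏ j : Fin g, (X - C (x j)))
    (Fc : Fin g → R) (hFc : ∀ i : Fin g, Fc i = ∑ j : Fin g, x j ^ (i : ℕ) * v j)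
    (D : R[X]) (hD : D = ∑ i : Fin g, C (Fc i) * X ^ (g - (i : ℕ)))
    (Q : R[X]) (hQ : Q = ∑ k ∈ Finset.range g, C ((U * D).coeff (g + 1 + k)) * X ^ k) :
    Q = ∑ j : Fin g, C (v j) * ∏ i ∈ Finset.univ.erase j, (X - C (x i)) := by
  classical
  have hS := sum_C_mul_prod_erase_X_sub_C_mem_degreeLT Finset.univ x v
  have hT := sum_C_mul_prod_erase_X_sub_C_mem_degreeLT Finset.univ x (fun j => v j * x j ^ g)
  rw [Finset.card_univ, Fintype.card_fin] at hS hT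
  have hUD : U * D = X * (X ^ g * ∑ j, C (v j) * ∏ i ∈ Finset.univ.erase j, (X - C (x i))
      - ∑ j, C (v j * x j ^ g) * ∏ i ∈ Finset.univ.erase j, (X - C (x i))) := by
    rw [hU, hD]
    simp only [hFc]
    rw [Fin.sum_univ_eq_sum_range (fun i => C (∑ j, x j ^ i * v j) * X ^ (g - i)),
      sum_range_C_powerSum_mul_X_pow, prod_X_sub_C_mul_sum_C_mul_sum_range]
  simp_rw [hQ, hUD, add_right_comm g 1, coeff_X_mul, coeff_X_pow_mul_sub_of_mem_degreeLT _ hT]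
  exact sum_range_C_coeff_mul_X_pow_of_mem_degreeLT hS
end

section
/- Let F be a field, let x₁, …, x_g be pairwise distinct elements of F, let v₁, …, v_g ∈ F, and let U(z) = ∏_{j=1}^g (z − x_j). For i = 1, …, g set F_i = ∑_{j=1}^g x_j^{i−1} v_j, let D(z) = ∑_{i=1}^g F_i z^{g+1−i}, write U(z)·D(z) = ∑_{k=0}^{2g} q_k z^k, and define Q(z) = ∑_{k=0}^{g−1} q_{g+1+k} z^k. Then Q(x_j) = v_j · U'(x_j) for every j = 1, …, g, where U' is the formal derivative of U. -/
open Polynomial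

/-!
Grouping `D` by nodes gives `D = ∑ⱼ vⱼ ∑_{i<g} xⱼ^i z^(g-i)`, and the geometric sum telescopes:
`(z - xⱼ) ∑_{i<g} xⱼ^i z^(g-i) = z^(g+1) - xⱼ^g z`. Hence `U D = z^(g+1) S - z T` with
`S = ∑ⱼ vⱼ U/(z - xⱼ)` and `T` of degree `< g`, so the coefficients of `z^(g+1), …, z^(2g)` in
`U D` are those of `S`, which has degree `< g`: thus `Q = S`. Finally
`S(xⱼ) = vⱼ (U/(z - xⱼ))(xⱼ) = vⱼ U'(xⱼ)`.
-/

open Finset Lagrange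

theorem sub_mul_sum_range_pow_mul_pow {R : Type*} [CommRing R] (a b : R) (n : ℕ) :
    (b - a) * ∑ k ∈ range n, a ^ k * b ^ (n - k) = b ^ (n + 1) - a ^ n * b := by
  have h := geom_sum₂_mul a b (n + 1)
  simp only [Nat.add_sub_cancel, sum_range_succ, Nat.sub_self, pow_zero, mul_one] at h
  linear_combination -h

namespace Polynomial

theorem sum_range_C_coeff_X_pow_mul_sub_mul_X_pow {R : Type*} [Ring R] {p q : R[X]} {m n : ℕ}
    (hp : p.degree < m) (hq : q.degree < n) :
    ∑ k ∈ range m, C ((X ^ n * p - q).coeff (n + k)) * X ^ k = p := by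
  ext i
  have hq_high : q.coeff (i + n) = 0 :=
    coeff_eq_zero_of_degree_lt (hq.trans_le (by exact_mod_cast Nat.le_add_left n i))
  simp only [finsetSum_coeff, coeff_C_mul_X_pow, coeff_sub, add_comm n, coeff_X_pow_mul, hq_high,
    sub_zero, sum_ite_eq, mem_range]
  split_ifs with hi
  · rfl
  · exact (coeff_eq_zero_of_degree_lt (hp.trans_le (by exact_mod_cast not_lt.1 hi))).symm

end Polynomial

namespace Lagrange

variable {R : Type*} [CommRing R] {ι : Type*} [DecidableEq ι] {s : Finset ι} (x v : ι → R)

theorem nodal_mul_sum_range_C_pow_mul_X_pow {i : ι} (hi : i ∈ s) (n : ℕ) :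
    nodal s x * ∑ k ∈ range n, C (x i) ^ k * X ^ (n - k)
      = nodal (s.erase i) x * (X ^ (n + 1) - C (x i ^ n) * X) := by
  rw [nodal_eq_mul_nodal_erase hi, mul_comm (X - C (x i)), mul_assoc,
    sub_mul_sum_range_pow_mul_pow, C_pow]

theorem nodal_mul_sum_range_C_sum_pow_mul_X_pow (n : ℕ) :
    nodal s x * ∑ k ∈ range n, C (∑ i ∈ s, x i ^ k * v i) * X ^ (n - k)
      = X ^ (n + 1) * ∑ i ∈ s, C (v i) * nodal (s.erase i) x
        - X * ∑ i ∈ s, C (v i * x i ^ n) * nodal (s.erase i) x := by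
  have hswap : ∑ k ∈ range n, C (∑ i ∈ s, x i ^ k * v i) * X ^ (n - k)
      = ∑ i ∈ s, C (v i) * ∑ k ∈ range n, C (x i) ^ k * X ^ (n - k) := by
    simp only [map_sum, sum_mul, mul_sum, map_mul, map_pow]
    rw [sum_comm]
    exact sum_congr rfl fun _ _ => sum_congr rfl fun _ _ => by ring
  rw [hswap, mul_sum, mul_sum, mul_sum, ← sum_sub_distrib]
  refine sum_congr rfl fun i hi => ?_
  rw [mul_left_comm, nodal_mul_sum_range_C_pow_mul_X_pow x hi, map_mul]
  ring

theorem degree_sum_C_mul_nodal_erase_lt [Nontrivial R] (w : ι → R) :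
    (∑ i ∈ s, C (w i) * nodal (s.erase i) x).degree < #s := by
  rw [← mem_degreeLT]
  refine Submodule.sum_mem _ fun i hi => ?_
  rw [← smul_eq_C_mul]
  refine Submodule.smul_mem _ _ (mem_degreeLT.2 ?_)
  rw [degree_nodal, card_erase_of_mem hi]
  exact_mod_cast Nat.sub_lt (card_pos.2 ⟨i, hi⟩) one_pos

theorem eval_sum_C_mul_nodal_erase {j : ι} (hj : j ∈ s) :
    (∑ i ∈ s, C (v i) * nodal (s.erase i) x).eval (x j)
      = v j * (derivative (nodal s x)).eval (x j) := by
  rw [eval_nodal_derivative_eval_node_eq hj, eval_finsetSum, sum_eq_single_of_mem j hj,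
    eval_mul, eval_C]
  intro i _ hij
  rw [eval_mul, eval_nodal_at_node (mem_erase.2 ⟨Ne.symm hij, hj⟩), mul_zero]

end Lagrange

theorem Q_eval_eq_v_mul_derivative_U_general
    (F : Type*) [Field F] (g : ℕ)
    (x : Fin g → F)
    (v : Fin g → F)
    (U : F[X]) (hU : U = ∏ j : Fin g, (X - C (x j)))
    (Fc : Fin g → F) (hFc : ∀ i : Fin g, Fc i = ∑ j : Fin g, x j ^ (i : ℕ) * v j)
    (D : F[X]) (hD : D = ∑ i : Fin g, C (Fc i) * X ^ (g - (i : ℕ)))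
    (Q : F[X]) (hQ : Q = ∑ k ∈ Finset.range g, C ((U * D).coeff (g + 1 + k)) * X ^ k) :
    ∀ j : Fin g, Q.eval (x j) = v j * (derivative U).eval (x j) := by
  intro j
  have hU' : U = nodal univ x := hU
  have hD' : D = ∑ k ∈ range g, C (∑ i, x i ^ k * v i) * X ^ (g - k) := by
    rw [hD, ← Fin.sum_univ_eq_sum_range (fun k => C (∑ i, x i ^ k * v i) * X ^ (g - k))]
    simp only [hFc]
  have hQS : Q = ∑ i, C (v i) * nodal (univ.erase i) x := by
    rw [hQ, hU', hD', nodal_mul_sum_range_C_sum_pow_mul_X_pow]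
    refine sum_range_C_coeff_X_pow_mul_sub_mul_X_pow ?_ ?_
    · simpa using degree_sum_C_mul_nodal_erase_lt (s := univ) x v
    · rw [mul_comm, degree_mul_X]
      have hT := degree_sum_C_mul_nodal_erase_lt (s := univ) x (fun i => v i * x i ^ g)
      rw [card_univ, Fintype.card_fin] at hT
      exact WithBot.add_lt_add_right (WithBot.coe_ne_bot) hT
  rw [hQS, hU', eval_sum_C_mul_nodal_erase x v (mem_univ j)]

/-- Let `F` be a field, `x₁, …, x_g` pairwise distinct, `v₁, …, v_g ∈ F`, and
`U(z) = ∏ (z − x_j)`. With `F_i = ∑_j x_j^{i−1} v_j`, `D(z) = ∑_{i=1}^g F_i z^{g+1−i}`,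
`U·D = ∑_{k=0}^{2g} q_k z^k` and `Q(z) = ∑_{k=0}^{g−1} q_{g+1+k} z^k`, we have
`Q(x_j) = v_j · U'(x_j)` for every `j`, where `U'` is the formal derivative of `U`.
(Indices are 0-based here: `F i = ∑_j x_j^i v_j` for `i : Fin g` and the corresponding
monomial in `D` is `z^(g−i)`.) -/
theorem Q_eval_eq_v_mul_derivative_U
    (F : Type*) [Field F] (g : ℕ)
    (x : Fin g → F) (hx : Function.Injective x)
    (v : Fin g → F)
    (U : F[X]) (hU : U = ∏ j : Fin g, (X - C (x j)))
    (Fc : Fin g → F) (hFc : ∀ i : Fin g, Fc i = ∑ j : Fin g, x j ^ (i : ℕ) * v j)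
    (D : F[X]) (hD : D = ∑ i : Fin g, C (Fc i) * X ^ (g - (i : ℕ)))
    (Q : F[X]) (hQ : Q = ∑ k ∈ Finset.range g, C ((U * D).coeff (g + 1 + k)) * X ^ k) :
    ∀ j : Fin g, Q.eval (x j) = v j * (derivative U).eval (x j) :=
  Q_eval_eq_v_mul_derivative_U_general F g x v U hU Fc hFc D hD Q hQ
end

section
/- Let F be a field of characteristic zero, let g ≥ 1, let f ∈ F[z], and let G ∈ F⟦t⟧^g. Let X(t) = (x₁(t), …, x_g(t)) ∈ F⟦t⟧^g be a solution of H(X(t))·X'(t) = G(t) with x₁(0), …, x_g(0) pairwise distinct and with y_i(0) ≠ 0, where y_i(t) is the unique square root of f(x_i(t)) with prescribed nonzero constant coefficient y_i(0). Let m ≥ 1 and let X_m(t) ∈ F⟦t⟧^g satisfy X_m(t) ≡ X(t) (mod t^m). Let y_i^{(m)}(t) be the unique square root of f(x_i^{(m)}(t)) with constant coefficient y_i(0), let H(X_m(t)) be the g×g matrix with entries x_j^{(m)}(t)^{i−1}/y_j^{(m)}(t) (which is invertible over F⟦t⟧), and define X_{2m}(t) = X_m(t) + H(X_m(t))^{−1}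 · ∫ (G(t) − H(X_m(t))·X_m'(t)) dt, where ∫ denotes the componentwise formal antiderivative with zero constant term. Then X_{2m}(t) ≡ X(t) (mod t^{2m}). -/
/-- The formal antiderivative (with zero constant term) of a formal power series over a field
of characteristic zero: `∫ (∑ aₙ tⁿ) dt = ∑ (aₙ/(n+1)) t^{n+1}`. -/
noncomputable def PowerSeries.integral {F : Type*} [Field F] [CharZero F]
    (a : PowerSeries F) : PowerSeries F :=
  PowerSeries.mk fun n => if n = 0 then 0 else PowerSeries.coeff (n - 1) a / (n : F)

/-!
Write `h(x) = x^k / √f(x)`, `a = x_j`, `b = x_j^{(m)}`, `u = h(a)`, `v = h(b)`. The identity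
`u a' - v b' - (v (a - b))' = ((u - v) b' - v' (a - b)) + (u - v)(a' - b')`
shows that the `j`-th summand of `H(X) X'` exceeds that of `H(X_m) X_m'` by the derivative of
`v (a - b)` up to `O(t^{2m-1})`, provided `u - v ≡ h'(b)(a - b)` to second order (multiplied
by `b'`, this is the first bracket). That first-order congruence holds for polynomials by
Taylor's formula and survives products, inverses and square roots with unit sum. Summing over
`j` and integrating, `∫ (G - H(X_m) X_m') ≡ H(X_m)(X - X_m) (mod t^{2m})`; applying
`H(X_m)⁻¹` gives the claim. The constant term of `H(X_m)` is a Vandermonde matrix with columns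
scaled by `y_j(0)⁻¹`, hence invertible.
-/

open PowerSeries Matrix

section FirstOrderCongr

variable {R A : Type*} [CommRing R] [CommRing A] [Algebra R A]

/-- Modulo `I`, `u - v` is the first-order change along `a - b` of a quantity with value `v`
at `b`: for `u = h a`, `v = h b` we have `D v = h'(b) D b`, so the second condition reads
`(u - v - h'(b) (a - b)) D b ∈ I ^ 2`. -/
def FirstOrderCongr (I : Ideal A) (D : Derivation R A A) (a b u v : A) : Prop :=
  u - v ∈ I ∧ (u - v) * D b - D v * (a - b) ∈ I ^ 2

variable {I : Ideal A} {D : Derivation R A A} {a b : A}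

theorem Polynomial.exists_aeval_sub_aeval_eq_taylor (p : Polynomial R) (a b : A) :
    ∃ c, Polynomial.aeval a p - Polynomial.aeval b p =
      (a - b) * Polynomial.aeval b (Polynomial.derivative p) + c * (a - b) ^ 2 := by
  obtain ⟨c, hc⟩ := (p.map (algebraMap R A)).binomExpansion b (a - b)
  refine ⟨c, ?_⟩
  rw [add_sub_cancel, Polynomial.derivative_map, Polynomial.eval_map_algebraMap,
    Polynomial.eval_map_algebraMap, Polynomial.eval_map_algebraMap] at hc
  linear_combination hc

theorem FirstOrderCongr.aeval (hab : a - b ∈ I) (p : Polynomial R) :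
    FirstOrderCongr I D a b (Polynomial.aeval a p) (Polynomial.aeval b p) := by
  obtain ⟨c, hc⟩ := p.exists_aeval_sub_aeval_eq_taylor a b
  have hsq : (a - b) ^ 2 ∈ I ^ 2 := Ideal.pow_mem_pow hab 2
  refine ⟨hc ▸ I.add_mem (I.mul_mem_right _ hab) (I.mul_mem_left _ (Ideal.pow_le_self
    two_ne_zero hsq)), ?_⟩
  rw [Derivation.map_aeval, smul_eq_mul, hc]
  convert (I ^ 2).mul_mem_left (c * D b) hsq using 1
  ring

theorem FirstOrderCongr.mul {u₁ v₁ u₂ v₂ : A} (hab : a - b ∈ I)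
    (h₁ : FirstOrderCongr I D a b u₁ v₁) (h₂ : FirstOrderCongr I D a b u₂ v₂) :
    FirstOrderCongr I D a b (u₁ * u₂) (v₁ * v₂) := by
  refine ⟨?_, ?_⟩
  · convert I.add_mem (I.mul_mem_right u₂ h₁.1) (I.mul_mem_left v₁ h₂.1) using 1
    ring
  · have h : (u₂ - v₂) * (a - b) ∈ I ^ 2 := pow_two I ▸ Ideal.mul_mem_mul h₂.1 hab
    convert (I ^ 2).add_mem ((I ^ 2).add_mem ((I ^ 2).mul_mem_left u₂ h₁.2)
      ((I ^ 2).mul_mem_left (D v₁) h)) ((I ^ 2).mul_mem_left v₁ h₂.2) using 1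
    rw [Derivation.leibniz, smul_eq_mul, smul_eq_mul]
    ring

theorem FirstOrderCongr.of_mul_eq_one {u v u' v' : A} (hab : a - b ∈ I)
    (h : FirstOrderCongr I D a b u v) (hu : u * u' = 1) (hv : v * v' = 1) :
    FirstOrderCongr I D a b u' v' := by
  have hI : u' - v' ∈ I := by
    convert I.mul_mem_left (-(u' * v')) h.1 using 1
    linear_combination v' * hu - u' * hv
  refine ⟨hI, ?_⟩
  have hD : D v' = -v' ^ 2 * D v := by
    rw [D.leibniz_of_mul_eq_one (by rwa [mul_comm] at hv), smul_eq_mul]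
  have h' : (u' - v') * (a - b) ∈ I ^ 2 := pow_two I ▸ Ideal.mul_mem_mul hI hab
  convert (I ^ 2).add_mem ((I ^ 2).mul_mem_left (-(u' * v')) h.2)
    ((I ^ 2).mul_mem_left (-(v' * D v)) h') using 1
  rw [hD]
  linear_combination D b * (v' * hu - u' * hv)

theorem FirstOrderCongr.of_sq {u v : A} (hab : a - b ∈ I)
    (h : FirstOrderCongr I D a b (u ^ 2) (v ^ 2)) (huv : IsUnit (u + v)) :
    FirstOrderCongr I D a b u v := by
  have hI : u - v ∈ I :=
    (I.unit_mul_mem_iff_mem huv).mp (by convert h.1 using 1; ring)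
  refine ⟨hI, ((I ^ 2).unit_mul_mem_iff_mem huv).mp ?_⟩
  have h' : (u - v) * (a - b) ∈ I ^ 2 := pow_two I ▸ Ideal.mul_mem_mul hI hab
  convert (I ^ 2).add_mem h.2 ((I ^ 2).mul_mem_left (-D v) h') using 1
  simp only [D.leibniz_pow, nsmul_eq_mul, smul_eq_mul]
  ring

end FirstOrderCongr

theorem Matrix.dvd_mulVec_apply {m n α : Type*} [Fintype n] [CommSemiring α] (M : Matrix m n α)
    {c : α} {v : n → α} (hv : ∀ j, c ∣ v j) (i : m) : c ∣ (M *ᵥ v) i :=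
  Finset.dvd_sum fun j _ => (hv j).mul_left _

theorem Matrix.dvd_add_nonsing_inv_mulVec_sub {n α : Type*} [Fintype n] [DecidableEq n]
    [CommRing α] {H : Matrix n n α} (hH : IsUnit H.det) {c : α} {x₀ x r : n → α}
    (h : ∀ i, c ∣ r i - (H *ᵥ (x - x₀)) i) (i : n) : c ∣ (x₀ + H⁻¹ *ᵥ r - x) i := by
  have hres : x₀ + H⁻¹ *ᵥ r - x = H⁻¹ *ᵥ (r - H *ᵥ (x - x₀)) := by
    rw [mulVec_sub, mulVec_mulVec, nonsing_inv_mul H hH, one_mulVec]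
    abel
  exact hres ▸ H⁻¹.dvd_mulVec_apply h i

theorem PowerSeries.X_pow_dvd_derivative {R : Type*} [CommRing R] {n : ℕ} {f : R⟦X⟧}
    (hf : X ^ (n + 1) ∣ f) : X ^ n ∣ d⁄dX R f := by
  rw [X_pow_dvd_iff] at hf ⊢
  intro k hk
  rw [coeff_derivative, hf (k + 1) (by omega), zero_mul]

theorem FirstOrderCongr.X_pow_dvd_mul_derivative_sub {R : Type*} [CommRing R] {n : ℕ}
    {a b u v : R⟦X⟧} (hab : X ^ (n + 1) ∣ a - b)
    (h : FirstOrderCongr (Ideal.span {X ^ (n + 1)}) (d⁄dX R) a b u v) :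
    X ^ (2 * n + 1) ∣ u * d⁄dX R a - v * d⁄dX R b - d⁄dX R (v * (a - b)) := by
  have h₁ : X ^ (n + 1) ∣ u - v := Ideal.mem_span_singleton.mp h.1
  have h₂ : X ^ (2 * n + 2) ∣ (u - v) * d⁄dX R b - d⁄dX R v * (a - b) := by
    rw [← Ideal.mem_span_singleton, show 2 * n + 2 = (n + 1) * 2 by ring, pow_mul,
      ← Ideal.span_singleton_pow]
    exact h.2
  have hsplit : u * d⁄dX R a - v * d⁄dX R b - d⁄dX R (v * (a - b)) =
      ((u - v) * d⁄dX R b - d⁄dX R v * (a - b)) + (u - v) * d⁄dX R (a - b) := by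
    simp only [Derivation.leibniz, map_sub, smul_eq_mul]
    ring
  rw [hsplit]
  refine dvd_add ((pow_dvd_pow X (by omega)).trans h₂) ?_
  rw [show 2 * n + 1 = (n + 1) + n by ring, pow_add]
  exact mul_dvd_mul h₁ (X_pow_dvd_derivative hab)

section Field

variable {F : Type*} [Field F]

theorem PowerSeries.X_pow_succ_dvd_integral_sub [CharZero F] {n : ℕ} {d s : F⟦X⟧}
    (hd : X ^ n ∣ d - d⁄dX F s) (hs : constantCoeff s = 0) :
    X ^ (n + 1) ∣ PowerSeries.integral d - s := by
  rw [X_pow_dvd_iff] at hd ⊢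
  rintro (_ | k) hk
  · simp [PowerSeries.integral, hs]
  · have hk' := hd k (by omega)
    rw [map_sub, coeff_derivative, sub_eq_zero] at hk'
    have hk0 : (k : F) + 1 ≠ 0 := by exact_mod_cast k.succ_ne_zero
    simp [PowerSeries.integral, hk', hk0]

theorem PowerSeries.isUnit_det_pow_mul_inv {g : ℕ} {a w : Fin g → F⟦X⟧}
    (ha : Function.Injective fun i => constantCoeff (a i)) (hw : ∀ j, constantCoeff (w j) ≠ 0) :
    IsUnit (Matrix.of fun i j : Fin g => a j ^ (i : ℕ) * (w j)⁻¹).det := by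
  rw [isUnit_iff_constantCoeff, RingHom.map_det, RingHom.mapMatrix_apply, isUnit_iff_ne_zero]
  have hmap : (Matrix.of fun i j : Fin g => a j ^ (i : ℕ) * (w j)⁻¹).map constantCoeff =
      Matrix.of fun i j => (constantCoeff (w j))⁻¹ *
        (Matrix.vandermonde fun j => constantCoeff (a j))ᵀ i j := by
    ext i j
    simp [Matrix.vandermonde, constantCoeff_inv, mul_comm]
  rw [hmap, Matrix.det_mul_row, Matrix.det_transpose]
  exact mul_ne_zero (Finset.prod_ne_zero_iff.mpr fun j _ => inv_ne_zero (hw j))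
    (Matrix.det_vandermonde_ne_zero_iff.mpr ha)

theorem PowerSeries.firstOrderCongr_pow_mul_inv [CharZero F] {n k : ℕ} {f : Polynomial F}
    {a b y w : F⟦X⟧} (hab : X ^ n ∣ a - b) (hy : y ^ 2 = Polynomial.aeval a f)
    (hw : w ^ 2 = Polynomial.aeval b f) (hy₀ : constantCoeff y ≠ 0)
    (hw₀ : constantCoeff w = constantCoeff y) :
    FirstOrderCongr (Ideal.span {X ^ n}) (d⁄dX F) a b (a ^ k * y⁻¹) (b ^ k * w⁻¹) := by
  have hab' : a - b ∈ Ideal.span {X ^ n} := Ideal.mem_span_singleton.mpr hab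
  have hpow := FirstOrderCongr.aeval (D := d⁄dX F) hab' (Polynomial.X ^ k)
  simp only [map_pow, Polynomial.aeval_X] at hpow
  have hyw : IsUnit (y + w) := by
    rw [isUnit_iff_constantCoeff, map_add, hw₀, ← two_mul, isUnit_iff_ne_zero]
    exact mul_ne_zero two_ne_zero hy₀
  have hsqrt : FirstOrderCongr _ (d⁄dX F) a b y w :=
    .of_sq hab' (hy ▸ hw ▸ .aeval hab' f) hyw
  exact hpow.mul hab' (hsqrt.of_mul_eq_one hab' (PowerSeries.mul_inv_cancel y hy₀)
    (PowerSeries.mul_inv_cancel w (hw₀ ▸ hy₀)))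

end Field

theorem newton_iteration_doubles_precision_general
    (F : Type*) [Field F] [CharZero F] (g : ℕ)
    (f : Polynomial F) (G : Fin g → PowerSeries F)
    (X : Fin g → PowerSeries F)
    (hx₀ : Function.Injective fun i => PowerSeries.constantCoeff (X i))
    (Y : Fin g → PowerSeries F)
    (hy₀ : ∀ i, PowerSeries.constantCoeff (Y i) ≠ 0)
    (hY : ∀ i, Y i ^ 2 = Polynomial.aeval (X i) f)
    (hsol : ∀ i : Fin g,
      ∑ j : Fin g, X j ^ (i : ℕ) * (Y j)⁻¹ * PowerSeries.derivativeFun (X j) = G i)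
    (m : ℕ) (hm : 1 ≤ m)
    (Xm : Fin g → PowerSeries F)
    (hXm : ∀ i, ∀ n < m, PowerSeries.coeff n (Xm i) = PowerSeries.coeff n (X i))
    (Ym : Fin g → PowerSeries F)
    (hYm : ∀ i, Ym i ^ 2 = Polynomial.aeval (Xm i) f ∧
      PowerSeries.constantCoeff (Ym i) = PowerSeries.constantCoeff (Y i))
    (Hm : Matrix (Fin g) (Fin g) (PowerSeries F))
    (hHm : Hm = Matrix.of fun i j : Fin g => Xm j ^ (i : ℕ) * (Ym j)⁻¹)
    (X2m : Fin g → PowerSeries F)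
    (hX2m : X2m = fun i =>
      Xm i +
        Hm⁻¹.mulVec
          (fun i' => PowerSeries.integral
            (G i' - Hm.mulVec (fun j => PowerSeries.derivativeFun (Xm j)) i')) i) :
    IsUnit Hm.det ∧
      ∀ i, ∀ n < 2 * m, PowerSeries.coeff n (X2m i) = PowerSeries.coeff n (X i) := by
  obtain ⟨n, rfl⟩ : ∃ n, m = n + 1 := ⟨m - 1, by omega⟩
  have hXm₀ (j) : constantCoeff (Xm j) = constantCoeff (X j) := by
    simpa using hXm j 0 n.succ_pos
  have hdet : IsUnit Hm.det :=
    hHm ▸ isUnit_det_pow_mul_inv (by simpa only [hXm₀] using hx₀) fun j => (hYm j).2 ▸ hy₀ j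
  refine ⟨hdet, ?_⟩
  have hE (j) : PowerSeries.X ^ (n + 1) ∣ (X - Xm) j :=
    X_pow_dvd_iff.mpr fun k hk => by simp only [Pi.sub_apply, map_sub, hXm j k hk, sub_self]
  set r : Fin g → F⟦X⟧ := fun i => G i - (Hm *ᵥ fun j => d⁄dX F (Xm j)) i
  have hres (i) : PowerSeries.X ^ (2 * n + 1) ∣ r i - d⁄dX F ((Hm *ᵥ (X - Xm)) i) := by
    have hsum : r i - d⁄dX F ((Hm *ᵥ (X - Xm)) i) =
        ∑ j, (X j ^ (i : ℕ) * (Y j)⁻¹ * d⁄dX F (X j) - Xm j ^ (i : ℕ) * (Ym j)⁻¹ * d⁄dX F (Xm j)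
          - d⁄dX F (Xm j ^ (i : ℕ) * (Ym j)⁻¹ * (X - Xm) j)) := by
      simp only [r, ← hsol i, hHm, mulVec, dotProduct, Matrix.of_apply, map_sum,
        Finset.sum_sub_distrib]
      rfl -- `derivativeFun` is `d⁄dX F` by definition
    rw [hsum]
    exact Finset.dvd_sum fun j _ => FirstOrderCongr.X_pow_dvd_mul_derivative_sub (hE j)
      (firstOrderCongr_pow_mul_inv (hE j) (hY j) (hYm j).1 (hy₀ j) (hYm j).2)
  have hint (i) : PowerSeries.X ^ (2 * (n + 1)) ∣
      PowerSeries.integral (r i) - (Hm *ᵥ (X - Xm)) i :=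
    X_pow_succ_dvd_integral_sub (hres i) <| X_dvd_iff.mp <|
      dvd_mulVec_apply Hm (fun j => (dvd_pow_self _ n.succ_ne_zero).trans (hE j)) i
  replace hX2m : X2m = Xm + Hm⁻¹ *ᵥ fun i => PowerSeries.integral (r i) := hX2m
  intro i k hk
  have := X_pow_dvd_iff.mp (dvd_add_nonsing_inv_mulVec_sub hdet hint i) k hk
  rwa [← hX2m, Pi.sub_apply, map_sub, sub_eq_zero] at this

/-- Let `F` be a field of characteristic zero, `g ≥ 1`, `f ∈ F[z]`,
`G ∈ F⟦t⟧^g`. Let `X(t)` solve `H(X(t))·X'(t) = G(t)` with pairwise distinct `x_i(0)` and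
nonzero `y_i(0)`, where `y_i(t)` is the unique square root of `f(x_i(t))` with constant
coefficient `y_i(0)`. For `m ≥ 1` let `X_m ≡ X (mod t^m)`, let `y_i^{(m)}` be the unique
square root of `f(x_i^{(m)})` with constant coefficient `y_i(0)`, let `H(X_m)` be the matrix
with entries `x_j^{(m)}{}^{i−1}/y_j^{(m)}` (which is invertible over `F⟦t⟧`), and set
`X_{2m} = X_m + H(X_m)⁻¹·∫(G − H(X_m)·X_m') dt`. Then `X_{2m} ≡ X (mod t^{2m})`. -/
theorem newton_iteration_doubles_precision
    (F : Type*) [Field F] [CharZero F] (g : ℕ) (hg : 1 ≤ g)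
    (f : Polynomial F) (G : Fin g → PowerSeries F)
    (X : Fin g → PowerSeries F)
    (hx₀ : Function.Injective fun i => PowerSeries.constantCoeff (X i))
    (Y : Fin g → PowerSeries F)
    (hy₀ : ∀ i, PowerSeries.constantCoeff (Y i) ≠ 0)
    (hY : ∀ i, Y i ^ 2 = Polynomial.aeval (X i) f)
    (hsol : ∀ i : Fin g,
      ∑ j : Fin g, X j ^ (i : ℕ) * (Y j)⁻¹ * PowerSeries.derivativeFun (X j) = G i)
    (m : ℕ) (hm : 1 ≤ m)
    (Xm : Fin g → PowerSeries F)
    (hXm : ∀ i, ∀ n < m, PowerSeries.coeff n (Xm i) = PowerSeries.coeff n (X i))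
    (Ym : Fin g → PowerSeries F)
    (hYm : ∀ i, Ym i ^ 2 = Polynomial.aeval (Xm i) f ∧
      PowerSeries.constantCoeff (Ym i) = PowerSeries.constantCoeff (Y i))
    (Hm : Matrix (Fin g) (Fin g) (PowerSeries F))
    (hHm : Hm = Matrix.of fun i j : Fin g => Xm j ^ (i : ℕ) * (Ym j)⁻¹)
    (X2m : Fin g → PowerSeries F)
    (hX2m : X2m = fun i =>
      Xm i +
        Hm⁻¹.mulVec
          (fun i' => PowerSeries.integral
            (G i' - Hm.mulVec (fun j => PowerSeries.derivativeFun (Xm j)) i')) i) :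
    IsUnit Hm.det ∧
      ∀ i, ∀ n < 2 * m, PowerSeries.coeff n (X2m i) = PowerSeries.coeff n (X i) :=
  newton_iteration_doubles_precision_general F g f G X hx₀ Y hy₀ hY hsol m hm Xm hXm Ym hYm Hm hHm
    X2m hX2m
end

section
/- Let K ⊆ L be fields of characteristic zero with L/K a finite Galois extension, let g ≥ 1, let f ∈ K[z], and let G ∈ K⟦t⟧^g. Let U₀(z) = ∏_{i=1}^g (z − x_i⁽⁰⁾) ∈ K[z] be a separable polynomial whose roots x₁⁽⁰⁾, …, x_g⁽⁰⁾ lie in L, and let V₀ ∈ K[z] be a polynomial such that y_i⁽⁰⁾ := V₀(x_i⁽⁰⁾) is nonzero and satisfies (y_i⁽⁰⁾)² = f(x_i⁽⁰⁾) for all i. Let X(t) = (x₁(t), …, x_g(t)) ∈ L⟦t⟧^g be the unique solution of the system H(X(t))·X'(t) = G(t) with x_i(0) = x_i⁽⁰⁾ and y_i(0) = y_i⁽⁰⁾. Then the polynomial U(t, z) = ∏_{i=1}^g (z − x_i(t)) has all its coefficients in K⟦t⟧, i.e. U(t,z) ∈ K⟦t⟧[z]. -/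
/-!
Every `σ ∈ Gal(L/K)` fixes `f`, `G`, `U₀` and `V₀`, so it permutes the roots `x_i⁽⁰⁾` of `U₀`
and, compatibly, the values `y_i⁽⁰⁾ = V₀(x_i⁽⁰⁾)`; applying `σ` coefficientwise to the solution
`(X, Y)` therefore gives a solution of the same system with permuted initial data. The solution
is unique: if two solutions agree modulo `t^(n+1)`, the `t^n`-coefficient of the difference of
the systems is a Vandermonde combination in the `x_i⁽⁰⁾` of the `t^(n+1)`-coefficients of
`x_i - x_i'`, so these vanish, and `y_i² = f(x_i)` then lifts the agreement to the `y_i`, since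
`y_i + y_i'` is a unit. Hence `σ` only permutes the `x_i(t)`, so it fixes every coefficient of
`U`, which therefore lies in `K`.
-/

open PowerSeries

namespace PowerSeries

variable {R S : Type*}

theorem X_pow_dvd_derivative_of_X_pow_succ_dvd [CommSemiring R] {n : ℕ} {φ : R⟦X⟧}
    (h : X ^ (n + 1) ∣ φ) : X ^ n ∣ d⁄dX R φ := by
  rw [X_pow_dvd_iff] at h ⊢
  intro m hm
  rw [coeff_derivative, h (m + 1) (by omega), zero_mul]

theorem coeff_mul_derivative_of_X_pow_succ_dvd [CommSemiring R] {n : ℕ} {φ : R⟦X⟧}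
    (h : X ^ (n + 1) ∣ φ) (ψ : R⟦X⟧) :
    coeff n (ψ * d⁄dX R φ) = constantCoeff ψ * (coeff (n + 1) φ * (n + 1)) := by
  obtain ⟨χ, hχ⟩ := X_pow_dvd_derivative_of_X_pow_succ_dvd h
  rw [← coeff_derivative, hχ, mul_left_comm]
  simp [coeff_X_pow_mul']

theorem coeff_mul_derivative_sub_of_X_pow_succ_dvd [CommRing R] {n : ℕ} {ψ ψ' φ φ' : R⟦X⟧}
    (hψ : X ^ (n + 1) ∣ ψ - ψ') (hφ : X ^ (n + 1) ∣ φ - φ') :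
    coeff n (ψ * d⁄dX R φ - ψ' * d⁄dX R φ') =
      constantCoeff ψ * (coeff (n + 1) (φ - φ') * (n + 1)) := by
  have hsplit : ψ * d⁄dX R φ - ψ' * d⁄dX R φ' = ψ * d⁄dX R (φ - φ') + (ψ - ψ') * d⁄dX R φ' := by
    rw [map_sub]; ring
  rw [hsplit, map_add, coeff_mul_derivative_of_X_pow_succ_dvd hφ,
    X_pow_dvd_iff.mp (dvd_mul_of_dvd_left hψ _) n (lt_add_one n), add_zero]

theorem X_pow_dvd_sub_of_X_pow_dvd_sq_sub_sq [CommRing R] {m : ℕ} {φ ψ : R⟦X⟧}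
    (hunit : IsUnit (constantCoeff φ + constantCoeff ψ)) (h : X ^ m ∣ φ ^ 2 - ψ ^ 2) :
    X ^ m ∣ φ - ψ := by
  rwa [sq_sub_sq, (isUnit_iff_constantCoeff.mpr (by rwa [map_add])).dvd_mul_left] at h

theorem inv_smodEq_inv {k : Type*} [Field k] {I : Ideal k⟦X⟧} {φ ψ : k⟦X⟧}
    (hφ : constantCoeff φ ≠ 0) (hψ : constantCoeff ψ ≠ 0) (h : φ ≡ ψ [SMOD I]) :
    φ⁻¹ ≡ ψ⁻¹ [SMOD I] :=
  calc φ⁻¹ = φ⁻¹ * (ψ * ψ⁻¹) := by rw [PowerSeries.mul_inv_cancel ψ hψ, mul_one]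
    _ ≡ φ⁻¹ * (φ * ψ⁻¹) [SMOD I] := SModEq.rfl.mul (h.symm.mul SModEq.rfl)
    _ = ψ⁻¹ := by rw [← mul_assoc, PowerSeries.inv_mul_cancel φ hφ, one_mul]

theorem constantCoeff_map [CommSemiring R] [CommSemiring S] (f : R →+* S) (φ : R⟦X⟧) :
    constantCoeff (map f φ) = f (constantCoeff φ) :=
  MvPowerSeries.constantCoeff_map f φ

theorem map_derivative [CommSemiring R] [CommSemiring S] (f : R →+* S) (φ : R⟦X⟧) :
    map f (d⁄dX R φ) = d⁄dX S (map f φ) := by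
  ext n
  simp [coeff_derivative]

protected theorem map_inv {k k' : Type*} [Field k] [Field k'] (f : k →+* k') (φ : k⟦X⟧) :
    map f φ⁻¹ = (map f φ)⁻¹ := by
  by_cases h : constantCoeff φ = 0
  · rw [inv_eq_zero.mpr h, map_zero, inv_eq_zero.mpr (by rw [constantCoeff_map, h, map_zero])]
  · rw [eq_inv_iff_mul_eq_one (by rwa [constantCoeff_map, map_ne_zero]), ← map_mul,
      PowerSeries.inv_mul_cancel φ h, map_one]

theorem map_aeval_map_algebraMap {K L : Type*} [CommRing K] [CommRing L] [Algebra K L]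
    {F : Type*} [FunLike F L L] [AlgHomClass F K L L] (σ : F) (p : Polynomial K) (φ : L⟦X⟧) :
    map (σ : L →+* L) (Polynomial.aeval φ (p.map (algebraMap K L))) =
      Polynomial.aeval (map (σ : L →+* L) φ) (p.map (algebraMap K L)) := by
  rw [Polynomial.aeval_map_algebraMap, Polynomial.aeval_map_algebraMap]
  exact (Polynomial.aeval_algHom_apply (mapAlgHom (AlgHomClass.toAlgHom σ)) φ p).symm

end PowerSeries

section AbelJacobiSystem

variable {L : Type*} [Field L] {g : ℕ}

/-- The left-hand side `H(x) x'` of the system, where `y j` stands for the square root `y_j(t)`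
of `f(x_j(t))`. -/
noncomputable def abelJacobiSystem (x y : Fin g → L⟦X⟧) (i : Fin g) : L⟦X⟧ :=
  ∑ j, x j ^ (i : ℕ) * (y j)⁻¹ * d⁄dX L (x j)

theorem abelJacobiSystem_comp_perm (π : Equiv.Perm (Fin g)) (x y : Fin g → L⟦X⟧) :
    abelJacobiSystem (x ∘ π) (y ∘ π) = abelJacobiSystem x y :=
  funext fun i => Equiv.sum_comp π fun j => x j ^ (i : ℕ) * (y j)⁻¹ * d⁄dX L (x j)

theorem map_abelJacobiSystem {L' : Type*} [Field L'] (f : L →+* L') (x y : Fin g → L⟦X⟧)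
    (i : Fin g) :
    map f (abelJacobiSystem x y i) = abelJacobiSystem (map f ∘ x) (map f ∘ y) i := by
  simp only [abelJacobiSystem, map_sum, map_mul, map_pow, PowerSeries.map_inv, map_derivative,
    Function.comp_apply]

theorem coeff_abelJacobiSystem_sub {x y x' y' : Fin g → L⟦X⟧} {n : ℕ}
    (hx : ∀ j, X ^ (n + 1) ∣ x j - x' j) (hy : ∀ j, X ^ (n + 1) ∣ y j - y' j)
    (hy₀ : ∀ j, constantCoeff (y j) ≠ 0) (hy₀' : ∀ j, constantCoeff (y' j) ≠ 0) (i : Fin g) :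
    coeff n (abelJacobiSystem x y i - abelJacobiSystem x' y' i) =
      ∑ j, (constantCoeff (y j))⁻¹ * (coeff (n + 1) (x j - x' j) * (n + 1)) *
        constantCoeff (x j) ^ (i : ℕ) := by
  simp only [abelJacobiSystem, ← Finset.sum_sub_distrib, map_sum]
  refine Finset.sum_congr rfl fun j _ => ?_
  have hcongr : X ^ (n + 1) ∣ x j ^ (i : ℕ) * (y j)⁻¹ - x' j ^ (i : ℕ) * (y' j)⁻¹ := by
    simp only [← Ideal.mem_span_singleton, ← SModEq.sub_mem] at hx hy ⊢
    exact ((hx j).pow _).mul (inv_smodEq_inv (hy₀ j) (hy₀' j) (hy j))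
  rw [coeff_mul_derivative_sub_of_X_pow_succ_dvd hcongr (hx j), map_mul, map_pow,
    constantCoeff_inv]
  ring

theorem X_pow_succ_dvd_sub_of_abelJacobiSystem_eq [CharZero L] {x y x' y' : Fin g → L⟦X⟧}
    {n : ℕ} (hx₀ : Function.Injective fun j => constantCoeff (x j))
    (hy₀ : ∀ j, constantCoeff (y j) ≠ 0) (hy₀' : ∀ j, constantCoeff (y' j) ≠ 0)
    (hsys : abelJacobiSystem x y = abelJacobiSystem x' y')
    (hx : ∀ j, X ^ (n + 1) ∣ x j - x' j) (hy : ∀ j, X ^ (n + 1) ∣ y j - y' j) (j : Fin g) :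
    X ^ (n + 2) ∣ x j - x' j := by
  have hvan := Matrix.eq_zero_of_forall_pow_sum_mul_pow_eq_zero hx₀ fun i => by
    rw [← coeff_abelJacobiSystem_sub hx hy hy₀ hy₀' i, hsys, sub_self, map_zero]
  have hcoeff : coeff (n + 1) (x j - x' j) = 0 := by
    simpa [hy₀ j, Nat.cast_add_one_ne_zero] using congrFun hvan j
  rw [X_pow_dvd_iff]
  intro m hm
  rcases Nat.lt_succ_iff_lt_or_eq.mp hm with hm | rfl
  · exact X_pow_dvd_iff.mp (hx j) m hm
  · exact hcoeff

theorem eq_of_abelJacobiSystem_eq [CharZero L] {x y x' y' : Fin g → L⟦X⟧} (p : Polynomial L)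
    (hx₀ : Function.Injective fun j => constantCoeff (x j)) (hy₀ : ∀ j, constantCoeff (y j) ≠ 0)
    (hxx₀ : ∀ j, constantCoeff (x j) = constantCoeff (x' j))
    (hyy₀ : ∀ j, constantCoeff (y j) = constantCoeff (y' j))
    (hy : ∀ j, y j ^ 2 = Polynomial.aeval (x j) p) (hy' : ∀ j, y' j ^ 2 = Polynomial.aeval (x' j) p)
    (hsys : abelJacobiSystem x y = abelJacobiSystem x' y') :
    x = x' := by
  have hy₀' : ∀ j, constantCoeff (y' j) ≠ 0 := fun j => hyy₀ j ▸ hy₀ j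
  have hdvd : ∀ n j, X ^ (n + 1) ∣ x j - x' j ∧ X ^ (n + 1) ∣ y j - y' j := by
    intro n
    induction n with
    | zero => simp [X_dvd_iff, hxx₀, hyy₀]
    | succ n ih =>
      have hx := X_pow_succ_dvd_sub_of_abelJacobiSystem_eq hx₀ hy₀ hy₀' hsys
        (fun j => (ih j).1) (fun j => (ih j).2)
      refine fun j => ⟨hx j, X_pow_dvd_sub_of_X_pow_dvd_sq_sub_sq ?_ ?_⟩
      · rw [← hyy₀, ← two_mul, isUnit_iff_ne_zero]
        exact mul_ne_zero two_ne_zero (hy₀ j)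
      · rw [hy, hy', ← Polynomial.eval_map_algebraMap, ← Polynomial.eval_map_algebraMap]
        exact (hx j).trans (Polynomial.sub_dvd_eval_sub _ _ _)
  funext j
  ext n
  rw [← sub_eq_zero, ← map_sub]
  exact X_pow_dvd_iff.mp (hdvd n j).1 n (lt_add_one n)

end AbelJacobiSystem

theorem AlgEquiv.exists_perm_apply_eq_of_map_eq_prod_X_sub_C {K L ι : Type*} [CommRing K]
    [CommRing L] [IsDomain L] [Algebra K L] [Fintype ι] {x : ι → L} (hx : Function.Injective x)
    {p : Polynomial K} (hp : p.map (algebraMap K L) = ∏ i, (Polynomial.X - Polynomial.C (x i)))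
    (σ : L ≃ₐ[K] L) :
    ∃ π : Equiv.Perm ι, ∀ i, σ (x i) = x (π i) := by
  have hroot : ∀ i, ∃ j, σ (x i) = x j := by
    intro i
    have hσ : (p.map (algebraMap K L)).eval (σ (x i)) = 0 := by
      rw [Polynomial.eval_map_algebraMap, Polynomial.aeval_algHom_apply,
        ← Polynomial.eval_map_algebraMap, hp, Polynomial.eval_prod,
        Finset.prod_eq_zero (Finset.mem_univ i) (by simp), map_zero]
    rw [hp, Polynomial.eval_prod, Finset.prod_eq_zero_iff] at hσ
    obtain ⟨j, -, hj⟩ := hσ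
    exact ⟨j, by simpa [sub_eq_zero] using hj⟩
  choose π hπ using hroot
  have hπ_inj : Function.Injective π := fun i j h => hx (σ.injective (by rw [hπ, hπ, h]))
  exact ⟨Equiv.ofBijective π (Finite.injective_iff_bijective.mp hπ_inj), hπ⟩

theorem mumford_polynomial_has_coefficients_in_base_field_general
    (K L : Type*) [Field K] [Field L] [Algebra K L] [CharZero K]
    [IsGalois K L]
    (g : ℕ)
    (f : Polynomial K) (G : Fin g → PowerSeries K)
    (x₀ : Fin g → L) (hx₀ : Function.Injective x₀)
    (U₀ : Polynomial K)
    (hU₀ : U₀.map (algebraMap K L) = ∏ i : Fin g, (Polynomial.X - Polynomial.C (x₀ i)))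
    (V₀ : Polynomial K)
    (y₀ : Fin g → L) (hy₀def : ∀ i, y₀ i = (V₀.map (algebraMap K L)).eval (x₀ i))
    (hy₀ : ∀ i, y₀ i ≠ 0)
    (X Y : Fin g → PowerSeries L)
    (hX0 : ∀ i, PowerSeries.constantCoeff (X i) = x₀ i)
    (hY0 : ∀ i, PowerSeries.constantCoeff (Y i) = y₀ i)
    (hYsq : ∀ i, Y i ^ 2 = Polynomial.aeval (X i) (f.map (algebraMap K L)))
    (hsol : ∀ i : Fin g,
      ∑ j : Fin g, X j ^ (i : ℕ) * (Y j)⁻¹ * PowerSeries.derivativeFun (X j) =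
        PowerSeries.map (algebraMap K L) (G i)) :
    ∀ k n : ℕ,
      PowerSeries.coeff n
          ((∏ i : Fin g, (Polynomial.X - Polynomial.C (X i))).coeff k) ∈
        (algebraMap K L).range := by
  have : CharZero L := charZero_of_injective_algebraMap (algebraMap K L).injective
  -- `derivativeFun` is the underlying function of `d⁄dX L`
  have hsys : ∀ i, abelJacobiSystem X Y i = map (algebraMap K L) (G i) := hsol
  intro k n
  rw [RingHom.mem_range, ← Set.mem_range, InfiniteGalois.mem_range_algebraMap_iff_fixed]
  intro σ
  obtain ⟨π, hπ⟩ := σ.exists_perm_apply_eq_of_map_eq_prod_X_sub_C hx₀ hU₀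
  have hσy₀ : ∀ i, σ (y₀ i) = y₀ (π i) := fun i => by
    rw [hy₀def, hy₀def, ← hπ, Polynomial.eval_map_algebraMap, Polynomial.eval_map_algebraMap,
      Polynomial.aeval_algHom_apply]
  have hσX : X ∘ π = map (σ : L →+* L) ∘ X := by
    refine eq_of_abelJacobiSystem_eq (y := Y ∘ π) (y' := map (σ : L →+* L) ∘ Y)
      (f.map (algebraMap K L)) (by simpa [Function.comp_def, hX0] using hx₀.comp π.injective)
      (fun j => hY0 (π j) ▸ hy₀ (π j)) (fun j => by simp [constantCoeff_map, hX0, hπ])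
      (fun j => by simp [constantCoeff_map, hY0, hσy₀]) (fun j => hYsq (π j))
      (fun j => by simp only [Function.comp_apply, ← map_pow, hYsq, map_aeval_map_algebraMap]) ?_
    rw [abelJacobiSystem_comp_perm]
    funext i
    rw [← map_abelJacobiSystem, hsys]
    ext m
    simp [coeff_map]
  have hU : (∏ i, (Polynomial.X - Polynomial.C (X i))).map (map (σ : L →+* L)) =
      ∏ i, (Polynomial.X - Polynomial.C (X i)) := by
    simp only [Polynomial.map_prod, Polynomial.map_sub, Polynomial.map_X, Polynomial.map_C]
    rw [← Equiv.prod_comp π fun i => Polynomial.X - Polynomial.C (X i)]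
    exact Finset.prod_congr rfl fun i _ => by rw [← Function.comp_apply (f := X), hσX]; rfl
  simpa [Polynomial.coeff_map, coeff_map] using congrArg (fun P => coeff n (P.coeff k)) hU

/-- Let `K ⊆ L` be fields of characteristic zero with `L/K` finite Galois,
`g ≥ 1`, `f ∈ K[z]`, `G ∈ K⟦t⟧^g`. Let `U₀(z) = ∏ (z − x_i⁽⁰⁾) ∈ K[z]` be separable with
roots `x_i⁽⁰⁾ ∈ L`, and `V₀ ∈ K[z]` with `y_i⁽⁰⁾ := V₀(x_i⁽⁰⁾)` nonzero and
`(y_i⁽⁰⁾)² = f(x_i⁽⁰⁾)`. Let `X(t) ∈ L⟦t⟧^g` be the (unique) solution of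
`H(X(t))·X'(t) = G(t)` with `x_i(0) = x_i⁽⁰⁾`, `y_i(0) = y_i⁽⁰⁾`. Then
`U(t, z) = ∏ (z − x_i(t))` has all its coefficients in `K⟦t⟧`: each power series coefficient
of each `z`-coefficient of `U` lies in the image of `K` in `L`. -/
theorem mumford_polynomial_has_coefficients_in_base_field
    (K L : Type*) [Field K] [Field L] [Algebra K L] [CharZero K]
    [FiniteDimensional K L] [IsGalois K L]
    (g : ℕ) (hg : 1 ≤ g)
    (f : Polynomial K) (G : Fin g → PowerSeries K)
    (x₀ : Fin g → L) (hx₀ : Function.Injective x₀)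
    (U₀ : Polynomial K)
    (hU₀ : U₀.map (algebraMap K L) = ∏ i : Fin g, (Polynomial.X - Polynomial.C (x₀ i)))
    (V₀ : Polynomial K)
    (y₀ : Fin g → L) (hy₀def : ∀ i, y₀ i = (V₀.map (algebraMap K L)).eval (x₀ i))
    (hy₀ : ∀ i, y₀ i ≠ 0)
    (hsq : ∀ i, y₀ i ^ 2 = (f.map (algebraMap K L)).eval (x₀ i))
    (X Y : Fin g → PowerSeries L)
    (hX0 : ∀ i, PowerSeries.constantCoeff (X i) = x₀ i)
    (hY0 : ∀ i, PowerSeries.constantCoeff (Y i) = y₀ i)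
    (hYsq : ∀ i, Y i ^ 2 = Polynomial.aeval (X i) (f.map (algebraMap K L)))
    (hsol : ∀ i : Fin g,
      ∑ j : Fin g, X j ^ (i : ℕ) * (Y j)⁻¹ * PowerSeries.derivativeFun (X j) =
        PowerSeries.map (algebraMap K L) (G i)) :
    ∀ k n : ℕ,
      PowerSeries.coeff n
          ((∏ i : Fin g, (Polynomial.X - Polynomial.C (X i))).coeff k) ∈
        (algebraMap K L).range :=
  mumford_polynomial_has_coefficients_in_base_field_general K L g f G x₀ hx₀ U₀ hU₀ V₀ y₀ hy₀def hy₀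
    X Y hX0 hY0 hYsq hsol
end
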